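/- Birch's Theorem: let A ∈ ℤ^{(d+1)×n} have full rank d+1, with first row the all-ones vector and i-th column (1, a_i), a_i ∈ ℤ^d; let c ∈ ℝ^n with all c_i > 0 and let u ∈ ℝ^n with all u_i > 0, u₊ = u_1+⋯+u_n. Then there exists exactly one vector p̂ ∈ ℝ^n such that (a) p̂_i = c_i θ₀ θ^{a_i} for all i, for some θ₀ > 0 and θ ∈ ℝ_{>0}^d, and (b) A p̂ = u₊^{-1} A u. Moreover, all coordinates of p̂ are positive and sum to 1, and p̂ is the unique maximizer of the log-likelihood function ℓ_u(p) = Σ_{i=1}^n u_i log(p_i) − u₊ log(p₁+⋯+p_n) over the set of all p satisfying (a). -/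

import Mathlib

noncomputable section

open scoped BigOperators

/-- The log-affine model determined by `A` (with columns `(1, a_i)`) and positive
scalings `c`: vectors `p` with `p_i = c_i θ₀ θ^{a_i}` for some `θ₀ > 0` and
`θ ∈ ℝ_{>0}^d` (condition (a) of Birch's theorem). -/
def logAffineModel {d n : ℕ} (a : Fin n → Fin d → ℤ) (c : Fin n → ℝ) :
    Set (Fin n → ℝ) :=
  {p | ∃ θ₀ : ℝ, 0 < θ₀ ∧ ∃ θ : Fin d → ℝ, (∀ j, 0 < θ j) ∧
    ∀ i, p i = c i * θ₀ * ∏ j, θ j ^ a i j}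

/-- The Birch (moment-matching) equations `A p = u₊⁻¹ A u` (condition (b)): the
all-ones row together with the rows of the `a_i`'s. -/
def birchEquations {d n : ℕ} (a : Fin n → Fin d → ℤ) (u : Fin n → ℝ)
    (p : Fin n → ℝ) : Prop :=
  (∑ i, p i) = (∑ i, u i)⁻¹ * (∑ i, u i) ∧
    ∀ r : Fin d, (∑ i, (a i r : ℝ) * p i) = (∑ i, u i)⁻¹ * (∑ i, (a i r : ℝ) * u i)

/-- The log-likelihood function `ℓ_u(p) = Σ_i u_i log p_i − u₊ log (p₁ + ⋯ + p_n)`. -/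
def logLikelihood {n : ℕ} (u : Fin n → ℝ) (p : Fin n → ℝ) : ℝ :=
  (∑ i, u i * Real.log (p i)) - (∑ i, u i) * Real.log (∑ i, p i)

namespace BirchAux

open Finset Matrix

variable {d n : ℕ}

/-- The linear form `ψ ↦ ⟨a_i, ψ⟩`. -/
def lc (a : Fin n → Fin d → ℤ) (ψ : Fin d → ℝ) (i : Fin n) : ℝ :=
  ∑ j, (a i j : ℝ) * ψ j

lemma lc_smul (a : Fin n → Fin d → ℤ) (s : ℝ) (ψ : Fin d → ℝ) (i : Fin n) :
    lc a (s • ψ) i = s * lc a ψ i := by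
  simp only [lc, Finset.mul_sum, Pi.smul_apply, smul_eq_mul]
  refine Finset.sum_congr rfl fun j _ => by ring

lemma lc_continuous (a : Fin n → Fin d → ℤ) (i : Fin n) :
    Continuous fun ψ : Fin d → ℝ => lc a ψ i := by
  exact continuous_finset_sum _ fun j _ => continuous_const.mul (continuous_apply j)

/-- Characterization of the log-affine model in exponential form. -/
lemma mem_model_iff {a : Fin n → Fin d → ℤ} {c : Fin n → ℝ} (hc : ∀ i, 0 < c i)
    {p : Fin n → ℝ} :
    p ∈ logAffineModel a c ↔
      ∃ t : ℝ, ∃ ψ : Fin d → ℝ, ∀ i, p i = c i * Real.exp (t + lc a ψ i) := by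
  constructor
  · rintro ⟨θ₀, hθ₀, θ, hθ, hp⟩
    refine ⟨Real.log θ₀, fun j => Real.log (θ j), fun i => ?_⟩
    rw [hp i, Real.exp_add, Real.exp_log hθ₀]
    have : ∀ j : Fin d, θ j ^ a i j = Real.exp ((a i j : ℝ) * Real.log (θ j)) := by
      intro j
      rw [← Real.rpow_intCast (θ j) (a i j), Real.rpow_def_of_pos (hθ j), mul_comm]
    simp only [this, ← Real.exp_sum, lc]
    ring
  · rintro ⟨t, ψ, hp⟩
    refine ⟨Real.exp t, Real.exp_pos t, fun j => Real.exp (ψ j), fun j => Real.exp_pos _,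
      fun i => ?_⟩
    rw [hp i, Real.exp_add]
    have : ∀ j : Fin d, Real.exp (ψ j) ^ a i j = Real.exp ((a i j : ℝ) * ψ j) := by
      intro j
      rw [← Real.rpow_intCast (Real.exp (ψ j)) (a i j),
        Real.rpow_def_of_pos (Real.exp_pos _), Real.log_exp, mul_comm]
    simp only [this, ← Real.exp_sum, lc]
    ring

lemma model_pos {a : Fin n → Fin d → ℤ} {c : Fin n → ℝ} (hc : ∀ i, 0 < c i)
    {p : Fin n → ℝ} (hp : p ∈ logAffineModel a c) : ∀ i, 0 < p i := by
  obtain ⟨t, ψ, h⟩ := (mem_model_iff hc).mp hp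
  intro i
  rw [h i]
  exact mul_pos (hc i) (Real.exp_pos _)

/-- Full rank implies: if `t + ⟨a_i, ψ⟩ = 0` for all `i`, then `t = 0` and `ψ = 0`. -/
lemma const_eq_zero (a : Fin n → Fin d → ℤ)
    (hrank : (Matrix.of fun (r : Fin (d + 1)) (i : Fin n) =>
        if h : (r : ℕ) = 0 then (1 : ℝ)
        else (a i ⟨(r : ℕ) - 1, by have := r.isLt; omega⟩ : ℝ)).rank = d + 1)
    (t : ℝ) (ψ : Fin d → ℝ) (h : ∀ i, t + lc a ψ i = 0) : t = 0 ∧ ψ = 0 := by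
  set M : Matrix (Fin (d + 1)) (Fin n) ℝ :=
    Matrix.of fun (r : Fin (d + 1)) (i : Fin n) =>
      if h : (r : ℕ) = 0 then (1 : ℝ)
      else (a i ⟨(r : ℕ) - 1, by have := r.isLt; omega⟩ : ℝ) with hM
  have hrT : Mᵀ.rank = d + 1 := by rw [Matrix.rank_transpose]; exact hrank
  have hker : LinearMap.ker Mᵀ.mulVecLin = ⊥ := by
    have h1 := LinearMap.finrank_range_add_finrank_ker Mᵀ.mulVecLin
    rw [Module.finrank_pi ℝ] at h1
    have h2 : Module.finrank ℝ (LinearMap.range Mᵀ.mulVecLin) = d + 1 := hrT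
    rw [h2, Fintype.card_fin] at h1
    have h3 : Module.finrank ℝ (LinearMap.ker Mᵀ.mulVecLin) = 0 := by omega
    exact Submodule.finrank_eq_zero.mp h3
  set w : Fin (d + 1) → ℝ := fun r =>
    if hr : (r : ℕ) = 0 then t else ψ ⟨(r : ℕ) - 1, by have := r.isLt; omega⟩ with hw
  have hmem : w ∈ LinearMap.ker Mᵀ.mulVecLin := by
    rw [LinearMap.mem_ker]
    funext i
    rw [Matrix.mulVecLin_apply]
    show (Matrix.mulVec Mᵀ w) i = 0
    rw [Matrix.mulVec, dotProduct]
    have : ∀ r : Fin (d + 1), Mᵀ i r * w r =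
        if hr : (r : ℕ) = 0 then t
        else (a i ⟨(r : ℕ) - 1, by have := r.isLt; omega⟩ : ℝ) *
          ψ ⟨(r : ℕ) - 1, by have := r.isLt; omega⟩ := by
      intro r
      by_cases hr : (r : ℕ) = 0
      · simp only [Matrix.transpose_apply, hM, hw, Matrix.of_apply, dif_pos hr, one_mul]
      · simp only [Matrix.transpose_apply, hM, hw, Matrix.of_apply, dif_neg hr]
    rw [Finset.sum_congr rfl fun r _ => this r, Fin.sum_univ_succ]
    have h0 : ((0 : Fin (d + 1)) : ℕ) = 0 := rfl
    rw [dif_pos h0]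
    have hsucc : ∀ r : Fin d,
        (if hr : ((Fin.succ r : Fin (d + 1)) : ℕ) = 0 then t
        else (a i ⟨((Fin.succ r : Fin (d + 1)) : ℕ) - 1, by
          have := (Fin.succ r : Fin (d + 1)).isLt; omega⟩ : ℝ) *
          ψ ⟨((Fin.succ r : Fin (d + 1)) : ℕ) - 1, by
            have := (Fin.succ r : Fin (d + 1)).isLt; omega⟩) = (a i r : ℝ) * ψ r := by
      intro r
      have hne : ((Fin.succ r : Fin (d + 1)) : ℕ) ≠ 0 := by simp [Fin.val_succ]
      rw [dif_neg hne]
      congr 1 <;> · congr 1; ext; simp [Fin.val_succ]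
    rw [Finset.sum_congr rfl fun r _ => hsucc r]
    have := h i
    rw [lc] at this
    linarith
  rw [hker, Submodule.mem_bot] at hmem
  constructor
  · have := congrFun hmem 0
    simpa [hw] using this
  · funext j
    have := congrFun hmem (Fin.succ j)
    have hne : ((Fin.succ j : Fin (d + 1)) : ℕ) ≠ 0 := by simp [Fin.val_succ]
    rw [hw] at this
    simp only [Pi.zero_apply] at this ⊢
    rw [dif_neg hne] at this
    rw [show (⟨((Fin.succ j : Fin (d + 1)) : ℕ) - 1, by
      have := (Fin.succ j : Fin (d + 1)).isLt; omega⟩ : Fin d) = j by ext; simp [Fin.val_succ]]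
      at this
    exact this

lemma lc_sub (a : Fin n → Fin d → ℤ) (ψ ψ' : Fin d → ℝ) (i : Fin n) :
    lc a (ψ - ψ') i = lc a ψ i - lc a ψ' i := by
  simp only [lc, ← Finset.sum_sub_distrib, Pi.sub_apply]
  exact Finset.sum_congr rfl fun j _ => by ring

lemma lc_add (a : Fin n → Fin d → ℤ) (ψ ψ' : Fin d → ℝ) (i : Fin n) :
    lc a (ψ + ψ') i = lc a ψ i + lc a ψ' i := by
  simp only [lc, ← Finset.sum_add_distrib, Pi.add_apply]
  exact Finset.sum_congr rfl fun j _ => by ring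

lemma lc_single (a : Fin n → Fin d → ℤ) (r : Fin d) (i : Fin n) :
    lc a ((Pi.single r (1 : ℝ) : Fin d → ℝ)) i = (a i r : ℝ) := by
  simp [lc, Pi.single_apply, mul_ite]

lemma lc_zero (a : Fin n → Fin d → ℤ) (i : Fin n) : lc a (0 : Fin d → ℝ) i = 0 := by
  simp [lc]

lemma log_model {a : Fin n → Fin d → ℤ} {c : Fin n → ℝ} (hc : ∀ i, 0 < c i)
    {q : Fin n → ℝ} {t : ℝ} {ψ : Fin d → ℝ}
    (hq : ∀ i, q i = c i * Real.exp (t + lc a ψ i)) (i : Fin n) :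
    Real.log (q i) = Real.log (c i) + (t + lc a ψ i) := by
  rw [hq i, Real.log_mul (hc i).ne' (Real.exp_pos _).ne', Real.log_exp]

end BirchAux

open BirchAux Finset

/-- Birch's Theorem: for a full-rank design matrix `A` with first row the all-ones
vector, positive scalings `c` and positive data `u`, there is exactly one point `p̂`
satisfying (a) `p̂ ∈ logAffineModel a c` and (b) `A p̂ = u₊⁻¹ A u`. Moreover, all
coordinates of `p̂` are positive and sum to `1`, `p̂` maximizes the log-likelihood
`ℓ_u` over the set of all `p` satisfying (a), and it is the unique such maximizer
(being scale-invariant, `ℓ_u` picks out `p̂` uniquely among the probability vectors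
satisfying (a)). -/
theorem birch_theorem {d n : ℕ} (hd : 1 ≤ d) (hn : 1 ≤ n)
    (a : Fin n → Fin d → ℤ)
    (hrank : (Matrix.of fun (r : Fin (d + 1)) (i : Fin n) =>
        if h : (r : ℕ) = 0 then (1 : ℝ)
        else (a i ⟨(r : ℕ) - 1, by have := r.isLt; omega⟩ : ℝ)).rank = d + 1)
    (c : Fin n → ℝ) (hc : ∀ i, 0 < c i)
    (u : Fin n → ℝ) (hu : ∀ i, 0 < u i) :
    ∃ p : Fin n → ℝ,
      (p ∈ logAffineModel a c ∧ birchEquations a u p) ∧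
      (∀ q : Fin n → ℝ, q ∈ logAffineModel a c ∧ birchEquations a u q → q = p) ∧
      (∀ i, 0 < p i) ∧ (∑ i, p i) = 1 ∧
      (∀ q ∈ logAffineModel a c, logLikelihood u q ≤ logLikelihood u p) ∧
      (∀ q ∈ logAffineModel a c, (∑ i, q i) = 1 → q ≠ p →
        logLikelihood u q < logLikelihood u p) := by
  classical
  haveI : Nonempty (Fin n) := ⟨⟨0, hn⟩⟩
  haveI : Nonempty (Fin d) := ⟨⟨0, hd⟩⟩
  have hne : (Finset.univ : Finset (Fin n)).Nonempty := Finset.univ_nonempty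
  set U : ℝ := ∑ i, u i with hU
  have hUpos : 0 < U := Finset.sum_pos (fun i _ => hu i) hne
  set Z : (Fin d → ℝ) → ℝ := fun ψ => ∑ i, c i * Real.exp (lc a ψ i) with hZ
  have hZpos : ∀ ψ, 0 < Z ψ :=
    fun ψ => Finset.sum_pos (fun i _ => mul_pos (hc i) (Real.exp_pos _)) hne
  set G : (Fin d → ℝ) → ℝ :=
    fun ψ => Real.log (Z ψ) - U⁻¹ * ∑ i, u i * lc a ψ i with hG
  have hZcont : Continuous Z :=
    continuous_finset_sum _ fun i _ =>
      continuous_const.mul (Real.continuous_exp.comp (lc_continuous a i))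
  have hGcont : Continuous G := by
    refine Continuous.sub (hZcont.log fun ψ => (hZpos ψ).ne') ?_
    exact continuous_const.mul (continuous_finset_sum _ fun i _ =>
      continuous_const.mul (lc_continuous a i))
  -- the "gap" function whose positivity gives coercivity
  set h : (Fin d → ℝ) → ℝ := fun ψ =>
    (Finset.univ.sup' hne fun i => lc a ψ i) - U⁻¹ * ∑ i, u i * lc a ψ i with hh
  have hhcont : Continuous h := by
    refine Continuous.sub ?_ (continuous_const.mul (continuous_finset_sum _ fun i _ =>
      continuous_const.mul (lc_continuous a i)))
    rw [continuous_iff_continuousAt]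
    intro ψ
    exact ContinuousAt.finset_sup'_apply hne fun i _ => (lc_continuous a i).continuousAt
  have hh0 : h 0 = 0 := by
    simp [hh, lc_zero]
  have hhpos : ∀ ψ : Fin d → ℝ, ψ ≠ 0 → 0 < h ψ := by
    intro ψ hψ
    by_contra hle
    push_neg at hle
    set Mx : ℝ := Finset.univ.sup' hne fun i => lc a ψ i with hMx
    have h1 : U * Mx ≤ ∑ i, u i * lc a ψ i := by
      have : Mx ≤ U⁻¹ * ∑ i, u i * lc a ψ i := by
        have := hle; rw [hh] at this; dsimp only at this; linarith
      calc U * Mx ≤ U * (U⁻¹ * ∑ i, u i * lc a ψ i) :=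
            mul_le_mul_of_nonneg_left this hUpos.le
        _ = ∑ i, u i * lc a ψ i := by field_simp
    have h2 : ∑ i, u i * lc a ψ i ≤ ∑ i, u i * Mx := by
      refine Finset.sum_le_sum fun i _ => ?_
      exact mul_le_mul_of_nonneg_left (Finset.le_sup' _ (Finset.mem_univ i)) (hu i).le
    have h3 : ∑ i, u i * Mx = U * Mx := by rw [← Finset.sum_mul]
    have h4 : ∑ i, u i * (Mx - lc a ψ i) = 0 := by
      rw [Finset.sum_congr rfl fun i _ => mul_sub (u i) Mx (lc a ψ i),
        Finset.sum_sub_distrib, h3]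
      linarith
    have h5 : ∀ i ∈ Finset.univ, u i * (Mx - lc a ψ i) = 0 :=
      (Finset.sum_eq_zero_iff_of_nonneg fun i _ => mul_nonneg (hu i).le
        (sub_nonneg.mpr (Finset.le_sup' _ (Finset.mem_univ i)))).mp h4
    have h6 : ∀ i, (-Mx) + lc a ψ i = 0 := by
      intro i
      have := h5 i (Finset.mem_univ i)
      rcases mul_eq_zero.mp this with h' | h'
      · exact absurd h' (hu i).ne'
      · linarith
    exact hψ (const_eq_zero a hrank _ ψ h6).2
  -- homogeneity of h
  have hhom : ∀ (s : ℝ), 0 ≤ s → ∀ v : Fin d → ℝ, h (s • v) = s * h v := by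
    intro s hs v
    rw [hh]
    dsimp only
    have e1 : (Finset.univ.sup' hne fun i => lc a (s • v) i) =
        s * Finset.univ.sup' hne fun i => lc a v i := by
      rw [Finset.sup'_congr hne rfl fun i _ => lc_smul a s v i]
      exact (Finset.comp_sup'_eq_sup'_comp hne (fun x => s * x)
        (fun x y => mul_max_of_nonneg x y hs)).symm
    have e2 : ∑ i, u i * lc a (s • v) i = s * ∑ i, u i * lc a v i := by
      rw [Finset.mul_sum]
      exact Finset.sum_congr rfl fun i _ => by rw [lc_smul]; ring
    rw [e1, e2]; ring
  -- minimum of h on the unit sphere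
  have hsphne : (fun _ : Fin d => (1 : ℝ)) ∈ Metric.sphere (0 : Fin d → ℝ) 1 := by
    simp [pi_norm_const']
  obtain ⟨ψε, hψεmem, hεmin⟩ :=
    (isCompact_sphere (0 : Fin d → ℝ) 1).exists_isMinOn ⟨_, hsphne⟩ hhcont.continuousOn
  set ε : ℝ := h ψε with hε
  have hψεnorm : ‖ψε‖ = 1 := by simpa using hψεmem
  have hεpos : 0 < ε := by
    refine hhpos ψε fun h0 => ?_
    rw [h0] at hψεnorm; simp at hψεnorm
  have hbound : ∀ ψ : Fin d → ℝ, ε * ‖ψ‖ ≤ h ψ := by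
    intro ψ
    by_cases hψ0 : ψ = 0
    · subst hψ0; simp [hh0]
    · have hn0 : ‖ψ‖ ≠ 0 := norm_ne_zero_iff.mpr hψ0
      set v : Fin d → ℝ := ‖ψ‖⁻¹ • ψ with hv
      have hvnorm : ‖v‖ = 1 := by
        rw [hv, norm_smul, norm_inv, norm_norm, inv_mul_cancel₀ hn0]
      have hvmem : v ∈ Metric.sphere (0 : Fin d → ℝ) 1 := by simp [hvnorm]
      have h1 : ε ≤ h v := hεmin hvmem
      have h2 : h ψ = ‖ψ‖ * h v := by
        rw [hv, ← hhom ‖ψ‖ (norm_nonneg ψ) _, smul_smul,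
          mul_inv_cancel₀ hn0, one_smul]
      rw [h2, mul_comm ε ‖ψ‖]
      exact mul_le_mul_of_nonneg_left h1 (norm_nonneg ψ)
  -- lower bound for G
  obtain ⟨i₀, -, hci₀⟩ := Finset.exists_min_image Finset.univ c hne
  have hGlb : ∀ ψ, Real.log (c i₀) + h ψ ≤ G ψ := by
    intro ψ
    obtain ⟨i₁, -, hi₁⟩ := Finset.exists_mem_eq_sup' hne fun i => lc a ψ i
    have h1 : c i₀ * Real.exp (Finset.univ.sup' hne fun i => lc a ψ i) ≤ Z ψ := by
      rw [hi₁]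
      calc c i₀ * Real.exp (lc a ψ i₁) ≤ c i₁ * Real.exp (lc a ψ i₁) :=
            mul_le_mul_of_nonneg_right (hci₀ i₁ (Finset.mem_univ i₁)) (Real.exp_pos _).le
        _ ≤ Z ψ := Finset.single_le_sum
            (fun i _ => (mul_pos (hc i) (Real.exp_pos _)).le) (Finset.mem_univ i₁)
    have h2 : Real.log (c i₀) + (Finset.univ.sup' hne fun i => lc a ψ i) ≤
        Real.log (Z ψ) := by
      have h3 := Real.log_le_log (mul_pos (hc i₀) (Real.exp_pos _)) h1
      rwa [Real.log_mul (hc i₀).ne' (Real.exp_pos _).ne', Real.log_exp] at h3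
    rw [hG, hh]; dsimp only; linarith
  -- coercivity and existence of a global minimizer of G
  have hcoer : Filter.Tendsto G (Filter.cocompact (Fin d → ℝ)) Filter.atTop := by
    have h1 : Filter.Tendsto (fun ψ : Fin d → ℝ => Real.log (c i₀) + ε * ‖ψ‖)
        (Filter.cocompact (Fin d → ℝ)) Filter.atTop := by
      apply Filter.tendsto_atTop_add_const_left
      exact tendsto_norm_cocompact_atTop.const_mul_atTop hεpos
    refine Filter.tendsto_atTop_mono (fun ψ => ?_) h1
    have := hbound ψ
    have := hGlb ψ
    linarith
  obtain ⟨ψs, hψs⟩ := hGcont.exists_forall_le hcoer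
  -- the candidate point
  set tp : ℝ := -Real.log (Z ψs) with htp
  set p : Fin n → ℝ := fun i => c i * Real.exp (tp + lc a ψs i) with hpdef
  have hprep : ∀ i, p i = c i * Real.exp (tp + lc a ψs i) := fun i => rfl
  have hpmem : p ∈ logAffineModel a c := (mem_model_iff hc).mpr ⟨tp, ψs, hprep⟩
  have hppos : ∀ i, 0 < p i := model_pos hc hpmem
  have hpsum : ∑ i, p i = 1 := by
    have : ∑ i, p i = Real.exp tp * Z ψs := by
      rw [hZ, Finset.mul_sum]
      exact Finset.sum_congr rfl fun i _ => by rw [hprep i, Real.exp_add]; ring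
    rw [this, htp, Real.exp_neg, Real.exp_log (hZpos ψs), inv_mul_cancel₀ (hZpos ψs).ne']
  -- first-order conditions
  have hfoc : ∀ r : Fin d, (∑ i, (a i r : ℝ) * p i) = U⁻¹ * ∑ i, (a i r : ℝ) * u i := by
    intro r
    set L : ℝ := U⁻¹ * ∑ i, u i * (a i r : ℝ) with hL
    set K : ℝ := U⁻¹ * ∑ i, u i * lc a ψs i with hK
    set S : ℝ → ℝ := fun t => ∑ i, c i * Real.exp (lc a ψs i + (a i r : ℝ) * t) with hS
    set g : ℝ → ℝ := fun t => Real.log (S t) - (K + L * t) with hg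
    have hSpos : ∀ t, 0 < S t :=
      fun t => Finset.sum_pos (fun i _ => mul_pos (hc i) (Real.exp_pos _)) hne
    have hlcpert : ∀ (t : ℝ) (i : Fin n),
        lc a (ψs + t • (Pi.single r (1 : ℝ) : Fin d → ℝ)) i = lc a ψs i + (a i r : ℝ) * t := by
      intro t i
      rw [lc_add, lc_smul, lc_single]
      ring
    have hexpand : ∀ t : ℝ, U⁻¹ * ∑ i, u i * (lc a ψs i + (a i r : ℝ) * t) = K + L * t := by
      intro t
      have e : (∑ i, u i * (lc a ψs i + (a i r : ℝ) * t)) =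
          (∑ i, u i * lc a ψs i) + (∑ i, u i * (a i r : ℝ)) * t := by
        rw [Finset.sum_mul, ← Finset.sum_add_distrib]
        exact Finset.sum_congr rfl fun i _ => by ring
      rw [e, hK, hL]; ring
    have hgG : ∀ t : ℝ, g t = G (ψs + t • (Pi.single r (1 : ℝ) : Fin d → ℝ)) := by
      intro t
      rw [hg, hG]
      dsimp only
      rw [← hexpand t]
      congr 2
      · rw [hZ]
        exact Finset.sum_congr rfl fun i _ => by rw [hlcpert t i]
      · exact Finset.sum_congr rfl fun i _ => by rw [hlcpert t i]
    have hgmin : ∀ t : ℝ, g 0 ≤ g t := by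
      intro t
      rw [hgG 0, hgG t]
      have : ψs + (0 : ℝ) • (Pi.single r (1 : ℝ) : Fin d → ℝ) = ψs := by simp
      rw [this]
      exact hψs _
    have hloc : IsLocalMin g 0 := Filter.Eventually.of_forall hgmin
    have hderS : HasDerivAt S
        (∑ i, c i * (Real.exp (lc a ψs i + (a i r : ℝ) * 0) * ((a i r : ℝ) * 1))) 0 := by
      apply HasDerivAt.fun_sum
      intro i _
      exact ((((hasDerivAt_id (0 : ℝ)).const_mul ((a i r : ℝ))).const_add
        (lc a ψs i)).exp).const_mul (c i)
    have hderg : HasDerivAt g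
        ((∑ i, c i * (Real.exp (lc a ψs i + (a i r : ℝ) * 0) * ((a i r : ℝ) * 1))) / S 0
          - L * 1) 0 :=
      (hderS.log (hSpos 0).ne').sub (((hasDerivAt_id (0 : ℝ)).const_mul L).const_add K)
    have hd0 : (∑ i, c i * (Real.exp (lc a ψs i + (a i r : ℝ) * 0) * ((a i r : ℝ) * 1)))
        / S 0 - L * 1 = 0 := by
      rw [← hderg.deriv]
      exact hloc.deriv_eq_zero
    have hS0 : S 0 = Z ψs := by
      rw [hS, hZ]
      exact Finset.sum_congr rfl fun i _ => by norm_num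
    have hnum : (∑ i, c i * (Real.exp (lc a ψs i + (a i r : ℝ) * 0) * ((a i r : ℝ) * 1)))
        = ∑ i, (a i r : ℝ) * (c i * Real.exp (lc a ψs i)) := by
      exact Finset.sum_congr rfl fun i _ => by rw [mul_zero, add_zero]; ring
    rw [hS0, hnum] at hd0
    have hpZ : ∀ i, (a i r : ℝ) * p i =
        ((a i r : ℝ) * (c i * Real.exp (lc a ψs i))) * (Z ψs)⁻¹ := by
      intro i
      rw [hprep i, htp, Real.exp_add, Real.exp_neg, Real.exp_log (hZpos ψs)]
      ring
    have hLe : L = U⁻¹ * ∑ i, (a i r : ℝ) * u i := by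
      rw [hL]
      congr 1
      exact Finset.sum_congr rfl fun i _ => by ring
    calc (∑ i, (a i r : ℝ) * p i)
        = (∑ i, (a i r : ℝ) * (c i * Real.exp (lc a ψs i))) * (Z ψs)⁻¹ := by
          rw [Finset.sum_mul]
          exact Finset.sum_congr rfl fun i _ => hpZ i
      _ = L := by
          rw [mul_one, sub_eq_zero, div_eq_iff (hZpos ψs).ne'] at hd0
          rw [hd0, mul_assoc, mul_inv_cancel₀ (hZpos ψs).ne', mul_one]
      _ = U⁻¹ * ∑ i, (a i r : ℝ) * u i := hLe
  have hpeq : birchEquations a u p := by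
    refine ⟨by rw [hpsum, inv_mul_cancel₀ hUpos.ne'], hfoc⟩
  have hUne : (∑ i, u i) ≠ 0 := by rw [← hU]; exact hUpos.ne'
  -- summation helper
  have hpair : ∀ (w : Fin n → ℝ) (Δt : ℝ) (Δψ : Fin d → ℝ),
      ∑ i, w i * (Δt + lc a Δψ i) =
        (∑ i, w i) * Δt + ∑ j, Δψ j * ∑ i, w i * (a i j : ℝ) := by
    intro w Δt Δψ
    have e1 : ∀ i, w i * (Δt + lc a Δψ i) =
        w i * Δt + ∑ j, Δψ j * (w i * (a i j : ℝ)) := by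
      intro i
      rw [lc, mul_add, Finset.mul_sum]
      congr 1
      exact Finset.sum_congr rfl fun j _ => by ring
    rw [Finset.sum_congr rfl fun i _ => e1 i, Finset.sum_add_distrib, ← Finset.sum_mul,
      Finset.sum_comm]
    congr 1
    exact Finset.sum_congr rfl fun j _ => (Finset.mul_sum _ _ _).symm
  -- difference of logs of two model points is an affine form
  have hdiffrep : ∀ q ∈ logAffineModel a c, ∃ Δt : ℝ, ∃ Δψ : Fin d → ℝ,
      ∀ i, Real.log (q i) - Real.log (p i) = Δt + lc a Δψ i := by
    intro q hq
    obtain ⟨tq, ψq, hqrep⟩ := (mem_model_iff hc).mp hq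
    refine ⟨tq - tp, ψq - ψs, fun i => ?_⟩
    rw [log_model hc hqrep i, log_model hc hprep i, lc_sub]
    ring
  -- switch from u–weights to p–weights using the Birch equations
  have hswitch : ∀ q ∈ logAffineModel a c,
      ∑ i, u i * (Real.log (q i) - Real.log (p i)) =
        U * ∑ i, p i * (Real.log (q i) - Real.log (p i)) := by
    intro q hq
    obtain ⟨Δt, Δψ, hΔ⟩ := hdiffrep q hq
    have l1 : ∑ i, u i * (Real.log (q i) - Real.log (p i)) =
        ∑ i, u i * (Δt + lc a Δψ i) :=
      Finset.sum_congr rfl fun i _ => by rw [hΔ i]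
    have l2 : ∑ i, p i * (Real.log (q i) - Real.log (p i)) =
        ∑ i, p i * (Δt + lc a Δψ i) :=
      Finset.sum_congr rfl fun i _ => by rw [hΔ i]
    rw [l1, l2, hpair u Δt Δψ, hpair p Δt Δψ, hpsum, ← hU]
    have hcol : ∀ j, ∑ i, u i * (a i j : ℝ) = U * ∑ i, p i * (a i j : ℝ) := by
      intro j
      have h2 : ∑ i, (a i j : ℝ) * u i = U * ∑ i, (a i j : ℝ) * p i := by
        rw [hfoc j, ← mul_assoc, mul_inv_cancel₀ hUpos.ne', one_mul]
      calc ∑ i, u i * (a i j : ℝ) = ∑ i, (a i j : ℝ) * u i :=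
            Finset.sum_congr rfl fun i _ => mul_comm _ _
        _ = U * ∑ i, (a i j : ℝ) * p i := h2
        _ = U * ∑ i, p i * (a i j : ℝ) := by
            congr 1; exact Finset.sum_congr rfl fun i _ => mul_comm _ _
    rw [Finset.sum_congr rfl fun j (_ : j ∈ Finset.univ) => by rw [hcol j]]
    rw [mul_add, Finset.mul_sum]
    congr 1
    · ring
    · exact Finset.sum_congr rfl fun j _ => by ring
  -- the elementary inequality  p·(log q − log p) ≤ q − p
  have hjens : ∀ q ∈ logAffineModel a c, (∑ i, q i) = 1 →
      (∑ i, p i * (Real.log (q i) - Real.log (p i))) ≤ 0 ∧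
      (q ≠ p → (∑ i, p i * (Real.log (q i) - Real.log (p i))) < 0) := by
    intro q hq hq1
    have hqpos := model_pos hc hq
    have hterm : ∀ i, p i * (Real.log (q i) - Real.log (p i)) ≤ q i - p i := by
      intro i
      rw [show Real.log (q i) - Real.log (p i) = Real.log (q i / p i) from
        (Real.log_div (hqpos i).ne' (hppos i).ne').symm]
      have h2 : Real.log (q i / p i) ≤ q i / p i - 1 :=
        Real.log_le_sub_one_of_pos (div_pos (hqpos i) (hppos i))
      have h3 : p i * Real.log (q i / p i) ≤ p i * (q i / p i - 1) :=
        mul_le_mul_of_nonneg_left h2 (hppos i).le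
      have h4 : p i * (q i / p i - 1) = q i - p i := by
        field_simp [(hppos i).ne']
      linarith
    have hsum0 : ∑ i, (q i - p i) = 0 := by
      rw [Finset.sum_sub_distrib, hq1, hpsum]; ring
    constructor
    · calc ∑ i, p i * (Real.log (q i) - Real.log (p i)) ≤ ∑ i, (q i - p i) :=
          Finset.sum_le_sum fun i _ => hterm i
        _ = 0 := hsum0
    · intro hqp
      obtain ⟨k, hk⟩ : ∃ k, q k ≠ p k := by
        by_contra hcon; push_neg at hcon; exact hqp (funext hcon)
      have hstrict : p k * (Real.log (q k) - Real.log (p k)) < q k - p k := by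
        rw [show Real.log (q k) - Real.log (p k) = Real.log (q k / p k) from
          (Real.log_div (hqpos k).ne' (hppos k).ne').symm]
        have hne1 : q k / p k ≠ 1 := by
          intro heq
          exact hk ((div_eq_one_iff_eq (hppos k).ne').mp heq)
        have h2 : Real.log (q k / p k) < q k / p k - 1 :=
          Real.log_lt_sub_one_of_pos (div_pos (hqpos k) (hppos k)) hne1
        have h3 := mul_lt_mul_of_pos_left h2 (hppos k)
        have h4 : p k * (q k / p k - 1) = q k - p k := by field_simp [(hppos k).ne']
        linarith
      calc ∑ i, p i * (Real.log (q i) - Real.log (p i)) < ∑ i, (q i - p i) :=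
          Finset.sum_lt_sum (fun i _ => hterm i) ⟨k, Finset.mem_univ k, hstrict⟩
        _ = 0 := hsum0
  -- likelihood difference for normalized model points
  have hlik : ∀ q ∈ logAffineModel a c, (∑ i, q i) = 1 →
      logLikelihood u q - logLikelihood u p =
        U * ∑ i, p i * (Real.log (q i) - Real.log (p i)) := by
    intro q hq hq1
    simp only [logLikelihood]
    rw [hq1, hpsum, Real.log_one, ← hswitch q hq]
    rw [Finset.sum_congr rfl fun i (_ : i ∈ Finset.univ) =>
      mul_sub (u i) (Real.log (q i)) (Real.log (p i)), Finset.sum_sub_distrib]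
    ring
  refine ⟨p, ⟨hpmem, hpeq⟩, ?_, hppos, hpsum, ?_, ?_⟩
  · -- uniqueness
    rintro q ⟨hqmem, hqeq⟩
    have hqpos := model_pos hc hqmem
    have hq1 : ∑ i, q i = 1 := by
      have h := hqeq.1
      rwa [inv_mul_cancel₀ hUne] at h
    obtain ⟨Δt, Δψ, hΔ⟩ := hdiffrep q hqmem
    have hzero : ∑ i, (q i - p i) * (Real.log (q i) - Real.log (p i)) = 0 := by
      have l1 : ∑ i, (q i - p i) * (Real.log (q i) - Real.log (p i))
          = ∑ i, (q i - p i) * (Δt + lc a Δψ i) :=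
        Finset.sum_congr rfl fun i _ => by rw [hΔ i]
      rw [l1, hpair (fun i => q i - p i) Δt Δψ]
      have e1 : ∑ i, (q i - p i) = 0 := by
        rw [Finset.sum_sub_distrib, hq1, hpsum]; ring
      have e2 : ∀ j, ∑ i, (q i - p i) * (a i j : ℝ) = 0 := by
        intro j
        have h1 : ∑ i, (a i j : ℝ) * q i = (∑ i, u i)⁻¹ * ∑ i, (a i j : ℝ) * u i :=
          hqeq.2 j
        have h2 := hfoc j
        rw [hU] at h2
        have e3 : ∑ i, (q i - p i) * (a i j : ℝ) =
            (∑ i, (a i j : ℝ) * q i) - ∑ i, (a i j : ℝ) * p i := by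
          rw [← Finset.sum_sub_distrib]
          exact Finset.sum_congr rfl fun i _ => by ring
        rw [e3, h1, h2, sub_self]
      rw [e1, Finset.sum_congr rfl fun j (_ : j ∈ Finset.univ) => by rw [e2 j, mul_zero]]
      simp
    have hnonneg : ∀ i ∈ Finset.univ,
        0 ≤ (q i - p i) * (Real.log (q i) - Real.log (p i)) := by
      intro i _
      rcases le_total (q i) (p i) with hle | hle
      · have hl := Real.log_le_log (hqpos i) hle
        have : 0 ≤ (p i - q i) * (Real.log (p i) - Real.log (q i)) :=
          mul_nonneg (by linarith) (by linarith)
        nlinarith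
      · have hl := Real.log_le_log (hppos i) hle
        exact mul_nonneg (by linarith) (by linarith)
    have hall := (Finset.sum_eq_zero_iff_of_nonneg hnonneg).mp hzero
    funext i
    by_contra hne'
    have hi := hall i (Finset.mem_univ i)
    rcases lt_or_gt_of_ne hne' with hlt | hlt
    · have hl := Real.log_lt_log (hqpos i) hlt
      nlinarith
    · have hl := Real.log_lt_log (hppos i) hlt
      nlinarith
  · -- p maximizes the likelihood on the model
    intro q hqmem
    have hqpos := model_pos hc hqmem
    have hs : 0 < ∑ i, q i := Finset.sum_pos (fun i _ => hqpos i) hne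
    set s : ℝ := ∑ i, q i with hsdef
    set q' : Fin n → ℝ := fun i => s⁻¹ * q i with hq'def
    have hq'rep : ∀ i, q' i = s⁻¹ * q i := fun i => rfl
    have hq'mem : q' ∈ logAffineModel a c := by
      obtain ⟨tq, ψq, hrep⟩ := (mem_model_iff hc).mp hqmem
      refine (mem_model_iff hc).mpr ⟨tq - Real.log s, ψq, fun i => ?_⟩
      rw [hq'rep i, hrep i,
        show tq - Real.log s + lc a ψq i = (tq + lc a ψq i) - Real.log s by ring,
        Real.exp_sub, Real.exp_log hs]
      field_simp
    have hq'sum : ∑ i, q' i = 1 := by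
      rw [Finset.sum_congr rfl fun i (_ : i ∈ Finset.univ) => hq'rep i,
        ← Finset.mul_sum, ← hsdef, inv_mul_cancel₀ hs.ne']
    have hll : logLikelihood u q' = logLikelihood u q := by
      simp only [logLikelihood]
      rw [hq'sum, Real.log_one, ← hsdef]
      have e : ∀ i, u i * Real.log (q' i) =
          u i * Real.log (q i) + u i * Real.log s⁻¹ := by
        intro i
        rw [hq'rep i, Real.log_mul (inv_ne_zero hs.ne') (hqpos i).ne']
        ring
      rw [Finset.sum_congr rfl fun i (_ : i ∈ Finset.univ) => e i,
        Finset.sum_add_distrib, ← Finset.sum_mul, Real.log_inv, ← hU]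
      ring
    have hd := hlik q' hq'mem hq'sum
    have hj := (hjens q' hq'mem hq'sum).1
    have : logLikelihood u q' - logLikelihood u p ≤ 0 := by
      rw [hd]
      exact mul_nonpos_of_nonneg_of_nonpos hUpos.le hj
    linarith [hll ▸ this]
  · -- strict maximality among normalized model points
    intro q hqmem hq1 hqp
    have hd := hlik q hqmem hq1
    have hj := (hjens q hqmem hq1).2 hqp
    have : logLikelihood u q - logLikelihood u p < 0 := by
      rw [hd]
      exact mul_neg_of_pos_of_neg hUpos hj
    linarith
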